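/- Consider the Hamiltonian H(L, Θ, P_L, P_Θ) = (1/2)(P_L²/4 + P_Θ²/L²) + L²(k/2 + 1 − cos Θ) with k = 1/2, on {L > 0} × ℝ³, with Hamilton's equations L' = P_L/4, Θ' = P_Θ/L², P_L' = P_Θ²/L³ − 2L(k/2 + 1 − cos Θ), P_Θ' = −L² sin Θ. Then the function Q(L, Θ, P_L, P_Θ) = (3/L²)(L cos(Θ/2)·P_L − 2 sin(Θ/2)·P_Θ)²·P_Θ + 2L³(1 + cos Θ)(sin Θ)·P_L − L²(3 + cos Θ − 2 cos 2Θ)·P_Θ is a first integral: along every differentiable solution with L(t) > 0, the value of Q is constant in t. -/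

import Mathlib

/-!
In the half-angle variables c = cos(Θ/2), s = sin(Θ/2) both Q and Hamilton's equations become
rational in (L, c, s, P_L, P_Θ), the equation Θ' = P_Θ/L² turning into the rotation
c' = -s Θ'/2, s' = c Θ'/2. After clearing powers of L, the derivative of Q along the flow is a
polynomial multiple of c² + s² - 1, so it vanishes and Q is constant.
-/

/-- The third first integral Q = W₃ + A₁,₁ P_L + A₁,₂ P_Θ for k = 1/2 (n = 3). -/
noncomputable def pendQ3 (L Θ PL PΘ : ℝ) : ℝ :=
  (3 / L ^ 2) * (L * Real.cos (Θ / 2) * PL - 2 * Real.sin (Θ / 2) * PΘ) ^ 2 * PΘ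
    + 2 * L ^ 3 * (1 + Real.cos Θ) * Real.sin Θ * PL
    - L ^ 2 * (3 + Real.cos Θ - 2 * Real.cos (2 * Θ)) * PΘ

open Real

/-- The numbers c, s stand for cos(Θ/2), sin(Θ/2); the last term uses
3 + cos Θ - 2 cos 2Θ = (1 + cos Θ)(5 - 4 cos Θ) = 2c²(c² + 9s²) on c² + s² = 1. -/
noncomputable def pendQ3HalfAngle (L c s PL PΘ : ℝ) : ℝ :=
  3 / L ^ 2 * (L * c * PL - 2 * s * PΘ) ^ 2 * PΘ + 8 * L ^ 3 * c ^ 3 * s * PL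
    - 2 * L ^ 2 * c ^ 2 * (c ^ 2 + 9 * s ^ 2) * PΘ

theorem pendQ3_eq_pendQ3HalfAngle (L Θ PL PΘ : ℝ) :
    pendQ3 L Θ PL PΘ = pendQ3HalfAngle L (cos (Θ / 2)) (sin (Θ / 2)) PL PΘ := by
  obtain ⟨φ, rfl⟩ : ∃ φ, Θ = 2 * φ := ⟨Θ / 2, by ring⟩
  rw [pendQ3, pendQ3HalfAngle, mul_div_cancel_left₀ φ two_ne_zero]
  simp only [cos_two_mul, sin_two_mul]
  linear_combination (18 * L ^ 2 * cos φ ^ 2 * PΘ) * sin_sq_add_cos_sq φ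

/-- The hypotheses are Hamilton's equations for k = 1/2 in the half-angle variables. -/
theorem hasDerivAt_pendQ3HalfAngle_of_flow {L c s PL PΘ : ℝ → ℝ} {t : ℝ} (hL0 : L t ≠ 0)
    (hcs : c t ^ 2 + s t ^ 2 = 1)
    (hL : HasDerivAt L (PL t / 4) t)
    (hc : HasDerivAt c (-(s t * PΘ t) / (2 * L t ^ 2)) t)
    (hs : HasDerivAt s (c t * PΘ t / (2 * L t ^ 2)) t)
    (hPL : HasDerivAt PL (PΘ t ^ 2 / L t ^ 3 - 2 * L t * (5 / 4 - (c t ^ 2 - s t ^ 2))) t)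
    (hPΘ : HasDerivAt PΘ (-(2 * L t ^ 2 * s t * c t)) t) :
    HasDerivAt (fun t => pendQ3HalfAngle (L t) (c t) (s t) (PL t) (PΘ t)) 0 t := by
  have h := ((((hasDerivAt_const t (3 : ℝ)).div (hL.pow 2) (pow_ne_zero 2 hL0)).mul
      ((((hL.mul hc).mul hPL).sub ((hs.const_mul 2).mul hPΘ)).pow 2)).mul hPΘ).add
      ((((((hL.pow 3).const_mul 8).mul (hc.pow 3)).mul hs).mul hPL)) |>.sub
      ((((((hL.pow 2).const_mul 2).mul (hc.pow 2)).mul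
        ((hc.pow 2).add ((hs.pow 2).const_mul 9))).mul hPΘ))
  refine h.congr_deriv ?_
  simp only [Pi.add_apply, Pi.sub_apply, Pi.mul_apply, Pi.div_apply, Pi.pow_apply]
  field_simp
  linear_combination (40 * L t ^ 4 * c t *
    (3 * L t * c t * PL t * PΘ t - 6 * s t * PΘ t ^ 2 + 4 * L t ^ 4 * c t ^ 2 * s t)) * hcs

theorem Q_is_first_integral_n_three
    (k : ℝ) (hk : k = 1 / 2) (L Θ PL PΘ : ℝ → ℝ)
    (hLpos : ∀ t, 0 < L t)
    (hL : ∀ t, HasDerivAt L (PL t / 4) t)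
    (hΘ : ∀ t, HasDerivAt Θ (PΘ t / L t ^ 2) t)
    (hPL : ∀ t, HasDerivAt PL
      (PΘ t ^ 2 / L t ^ 3 - 2 * L t * (k / 2 + 1 - Real.cos (Θ t))) t)
    (hPΘ : ∀ t, HasDerivAt PΘ (-(L t ^ 2) * Real.sin (Θ t)) t) :
    ∀ t₁ t₂ : ℝ, pendQ3 (L t₁) (Θ t₁) (PL t₁) (PΘ t₁)
      = pendQ3 (L t₂) (Θ t₂) (PL t₂) (PΘ t₂) := by
  subst hk
  have hQ' (t : ℝ) : HasDerivAt (fun t => pendQ3 (L t) (Θ t) (PL t) (PΘ t)) 0 t := by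
    have hcos : cos (Θ t) = cos (Θ t / 2) ^ 2 - sin (Θ t / 2) ^ 2 := by
      rw [← cos_two_mul', mul_div_cancel₀ _ two_ne_zero]
    have hsin : sin (Θ t) = 2 * sin (Θ t / 2) * cos (Θ t / 2) := by
      rw [← sin_two_mul, mul_div_cancel₀ _ two_ne_zero]
    simp only [pendQ3_eq_pendQ3HalfAngle]
    refine hasDerivAt_pendQ3HalfAngle_of_flow (hLpos t).ne' (cos_sq_add_sin_sq _) (hL t)
      (((hasDerivAt_cos _).comp t ((hΘ t).div_const 2)).congr_deriv (by ring))
      (((hasDerivAt_sin _).comp t ((hΘ t).div_const 2)).congr_deriv (by ring))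
      ((hPL t).congr_deriv ?_) ((hPΘ t).congr_deriv ?_)
    · rw [hcos]; ring
    · rw [hsin]; ring
  exact fun t₁ t₂ => is_const_of_deriv_eq_zero (fun t => (hQ' t).differentiableAt)
    (fun t => (hQ' t).deriv) t₁ t₂
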